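/- Let f be any smooth real function and let u(t,x) be any smooth real-valued function of two real variables (not assumed to solve any equation) with u_x(t,x) ≠ 0 for all (t,x). Define T̃₁ = (1/2)·u_xx²/u_x² + (1/3)·f(u)/u_x², X̃₁ = (1/2)·u_xx²·u_t/u_x³ − u_xx·u_tx/u_x² + (1/2)·u_t²/u_x² − (1/3)·u_t·f(u)/u_x³, and Q̃₁ = (u_tx·u_x − u_xx·u_t)/u_x³, all evaluated at (t,x). Then the characteristic identity ∂_t T̃₁ + ∂_x X̃₁ = Q̃₁ · (u_t − u_xxx + (3/2)·u_xx²/u_x − f(u)/u_x) holds at every point (t,x). (Q̃₁ is the conservation law multiplier admitted by the gKN equation for arbitrary f.) -/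

import Mathlib

open Real

/-- Partial derivative with respect to the second (spatial) variable. -/
noncomputable def pdx (u : ℝ → ℝ → ℝ) : ℝ → ℝ → ℝ := fun t x => deriv (fun y => u t y) x

/-- Partial derivative with respect to the first (time) variable. -/
noncomputable def pdt (u : ℝ → ℝ → ℝ) : ℝ → ℝ → ℝ := fun t x => deriv (fun s => u s x) t

/-- `u` solves the generalized Krichever-Novikov equation with nonlinearity `f`:
`u_t = u_xxx - (3/2) u_xx^2/u_x + f(u)/u_x`. -/
def isGKN (f : ℝ → ℝ) (u : ℝ → ℝ → ℝ) : Prop :=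
  ∀ t x, pdt u t x =
    pdx (pdx (pdx u)) t x - (3/2) * (pdx (pdx u) t x)^2 / pdx u t x + f (u t x) / pdx u t x

/-!
Once the mixed partials are identified (`u_xt = u_tx` and `u_xxt = u_txx`, by symmetry of second
derivatives of the smooth map `(t, x) ↦ u t x`), the chain and quotient rules express `∂_t T̃₁`
and `∂_x X̃₁` as rational functions of the jet `u_x, u_xx, u_xxx, u_t, u_tx, u_txx, f(u), f'(u)`
with only powers of `u_x` in the denominators, and the characteristic identity becomes a
polynomial identity after clearing them.
-/

open Function

section PartialDerivatives

variable {g : ℝ → ℝ → ℝ} {t x : ℝ}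

theorem hasDerivAt_pdx_fderiv (hg : DifferentiableAt ℝ (uncurry g) (t, x)) :
    HasDerivAt (fun y => g t y) (fderiv ℝ (uncurry g) (t, x) (0, 1)) x :=
  hg.hasFDerivAt.comp_hasDerivAt x ((hasDerivAt_const x t).prodMk (hasDerivAt_id x))

theorem hasDerivAt_pdt_fderiv (hg : DifferentiableAt ℝ (uncurry g) (t, x)) :
    HasDerivAt (fun s => g s x) (fderiv ℝ (uncurry g) (t, x) (1, 0)) t :=
  hg.hasFDerivAt.comp_hasDerivAt (f := fun s => (s, x)) t
    ((hasDerivAt_id' t).prodMk (hasDerivAt_const t x))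

theorem pdx_eq_fderiv (hg : DifferentiableAt ℝ (uncurry g) (t, x)) :
    pdx g t x = fderiv ℝ (uncurry g) (t, x) (0, 1) :=
  (hasDerivAt_pdx_fderiv hg).deriv

theorem pdt_eq_fderiv (hg : DifferentiableAt ℝ (uncurry g) (t, x)) :
    pdt g t x = fderiv ℝ (uncurry g) (t, x) (1, 0) :=
  (hasDerivAt_pdt_fderiv hg).deriv

theorem hasDerivAt_pdx (hg : DifferentiableAt ℝ (uncurry g) (t, x)) :
    HasDerivAt (fun y => g t y) (pdx g t x) x :=
  pdx_eq_fderiv hg ▸ hasDerivAt_pdx_fderiv hg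

theorem hasDerivAt_pdt (hg : DifferentiableAt ℝ (uncurry g) (t, x)) :
    HasDerivAt (fun s => g s x) (pdt g t x) t :=
  pdt_eq_fderiv hg ▸ hasDerivAt_pdt_fderiv hg

theorem uncurry_pdx (hg : Differentiable ℝ (uncurry g)) :
    uncurry (pdx g) = fun p => fderiv ℝ (uncurry g) p (0, 1) :=
  funext fun _ => pdx_eq_fderiv (hg _)

theorem uncurry_pdt (hg : Differentiable ℝ (uncurry g)) :
    uncurry (pdt g) = fun p => fderiv ℝ (uncurry g) p (1, 0) :=
  funext fun _ => pdt_eq_fderiv (hg _)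

theorem contDiff_pdx {m n : WithTop ℕ∞} (hg : ContDiff ℝ n (uncurry g)) (hmn : m + 1 ≤ n) :
    ContDiff ℝ m (uncurry (pdx g)) := by
  rw [uncurry_pdx (hg.differentiable (zero_lt_one.trans_le (le_add_self.trans hmn)).ne')]
  exact (hg.fderiv_right hmn).clm_apply contDiff_const

theorem contDiff_pdt {m n : WithTop ℕ∞} (hg : ContDiff ℝ n (uncurry g)) (hmn : m + 1 ≤ n) :
    ContDiff ℝ m (uncurry (pdt g)) := by
  rw [uncurry_pdt (hg.differentiable (zero_lt_one.trans_le (le_add_self.trans hmn)).ne')]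
  exact (hg.fderiv_right hmn).clm_apply contDiff_const

theorem pdt_pdx_eq_fderiv_fderiv (hg : ContDiff ℝ 2 (uncurry g)) :
    pdt (pdx g) t x = fderiv ℝ (fderiv ℝ (uncurry g)) (t, x) (1, 0) (0, 1) := by
  have hg' : ContDiff ℝ 1 (fderiv ℝ (uncurry g)) := hg.fderiv_right (by norm_num)
  rw [pdt_eq_fderiv ((contDiff_pdx hg one_add_one_eq_two.le).differentiable one_ne_zero _),
    uncurry_pdx (hg.differentiable two_ne_zero),
    fderiv_clm_apply (hg'.differentiable one_ne_zero _) (differentiableAt_const _)]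
  simp

theorem pdx_pdt_eq_fderiv_fderiv (hg : ContDiff ℝ 2 (uncurry g)) :
    pdx (pdt g) t x = fderiv ℝ (fderiv ℝ (uncurry g)) (t, x) (0, 1) (1, 0) := by
  have hg' : ContDiff ℝ 1 (fderiv ℝ (uncurry g)) := hg.fderiv_right (by norm_num)
  rw [pdx_eq_fderiv ((contDiff_pdt hg one_add_one_eq_two.le).differentiable one_ne_zero _),
    uncurry_pdt (hg.differentiable two_ne_zero),
    fderiv_clm_apply (hg'.differentiable one_ne_zero _) (differentiableAt_const _)]
  simp

theorem pdt_pdx_comm (hg : ContDiff ℝ 2 (uncurry g)) : pdt (pdx g) = pdx (pdt g) := by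
  funext t x
  rw [pdt_pdx_eq_fderiv_fderiv hg, pdx_pdt_eq_fderiv_fderiv hg]
  exact hg.contDiffAt.isSymmSndFDerivAt (by simp) _ _

end PartialDerivatives

section gKN

variable {f : ℝ → ℝ} {u : ℝ → ℝ → ℝ} {t x : ℝ}

theorem pdt_gKN_density (hf : Differentiable ℝ f) (hu : ContDiff ℝ 3 (uncurry u))
    (hux : pdx u t x ≠ 0) :
    pdt (fun t x => (1/2) * (pdx (pdx u) t x)^2 / (pdx u t x)^2
        + (1/3) * f (u t x) / (pdx u t x)^2) t x
      = pdx (pdx u) t x * pdt (pdx (pdx u)) t x / pdx u t x ^ 2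
        - pdx (pdx u) t x ^ 2 * pdt (pdx u) t x / pdx u t x ^ 3
        + (1/3) * deriv f (u t x) * pdt u t x / pdx u t x ^ 2
        - (2/3) * f (u t x) * pdt (pdx u) t x / pdx u t x ^ 3 := by
  have hu₁ : ContDiff ℝ 2 (uncurry (pdx u)) := contDiff_pdx hu (by norm_num)
  have hu₂ : ContDiff ℝ 1 (uncurry (pdx (pdx u))) := contDiff_pdx hu₁ (by norm_num)
  have dU := hasDerivAt_pdt (hu.differentiable (by norm_num) (t, x))
  have dUx := hasDerivAt_pdt (hu₁.differentiable (by norm_num) (t, x))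
  have dUxx := hasDerivAt_pdt (hu₂.differentiable (by norm_num) (t, x))
  have dFU := (hf (u t x)).hasDerivAt.comp t dU
  have hux2 := pow_ne_zero 2 hux
  refine ((((dUxx.pow 2).const_mul (1/2)).div (dUx.pow 2) hux2).add
    ((dFU.const_mul (1/3)).div (dUx.pow 2) hux2)).deriv.trans ?_
  simp only [Pi.pow_apply, Function.comp_apply]
  field_simp
  ring

theorem pdx_gKN_flux (hf : Differentiable ℝ f) (hu : ContDiff ℝ 3 (uncurry u))
    (hux : pdx u t x ≠ 0) :
    pdx (fun t x =>
        (1/2) * (pdx (pdx u) t x)^2 * (pdt u t x) / (pdx u t x)^3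
          - (pdx (pdx u) t x) * (pdx (pdt u) t x) / (pdx u t x)^2
          + (1/2) * (pdt u t x)^2 / (pdx u t x)^2
          - (1/3) * (pdt u t x) * (f (u t x)) / (pdx u t x)^3) t x
      = (pdx (pdx u) t x * pdx (pdx (pdx u)) t x * pdt u t x
            + (1/2) * pdx (pdx u) t x ^ 2 * pdx (pdt u) t x) / pdx u t x ^ 3
          - (3/2) * pdx (pdx u) t x ^ 3 * pdt u t x / pdx u t x ^ 4
        - (pdx (pdx (pdx u)) t x * pdx (pdt u) t x
            + pdx (pdx u) t x * pdx (pdx (pdt u)) t x) / pdx u t x ^ 2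
          + 2 * pdx (pdx u) t x ^ 2 * pdx (pdt u) t x / pdx u t x ^ 3
        + pdt u t x * pdx (pdt u) t x / pdx u t x ^ 2
          - pdt u t x ^ 2 * pdx (pdx u) t x / pdx u t x ^ 3
        - (1/3) * (pdx (pdt u) t x * f (u t x) + pdt u t x * deriv f (u t x) * pdx u t x)
            / pdx u t x ^ 3
          + pdt u t x * f (u t x) * pdx (pdx u) t x / pdx u t x ^ 4 := by
  have hu₁ : ContDiff ℝ 2 (uncurry (pdx u)) := contDiff_pdx hu (by norm_num)
  have hu₂ : ContDiff ℝ 1 (uncurry (pdx (pdx u))) := contDiff_pdx hu₁ (by norm_num)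
  have hut : ContDiff ℝ 2 (uncurry (pdt u)) := contDiff_pdt hu (by norm_num)
  have hutx : ContDiff ℝ 1 (uncurry (pdx (pdt u))) := contDiff_pdx hut (by norm_num)
  have dU := hasDerivAt_pdx (hu.differentiable (by norm_num) (t, x))
  have dUx := hasDerivAt_pdx (hu₁.differentiable (by norm_num) (t, x))
  have dUxx := hasDerivAt_pdx (hu₂.differentiable (by norm_num) (t, x))
  have dUt := hasDerivAt_pdx (hut.differentiable (by norm_num) (t, x))
  have dUtx := hasDerivAt_pdx (hutx.differentiable (by norm_num) (t, x))
  have dFU := (hf (u t x)).hasDerivAt.comp x dU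
  have hux2 := pow_ne_zero 2 hux
  have hux3 := pow_ne_zero 3 hux
  have dX₁ := (((dUxx.pow 2).const_mul (1/2)).mul dUt).div (dUx.pow 3) hux3
  have dX₂ := (dUxx.mul dUtx).div (dUx.pow 2) hux2
  have dX₃ := ((dUt.pow 2).const_mul (1/2)).div (dUx.pow 2) hux2
  have dX₄ := ((dUt.const_mul (1/3)).mul dFU).div (dUx.pow 3) hux3
  refine (((dX₁.sub dX₂).add dX₃).sub dX₄).deriv.trans ?_
  simp only [Pi.pow_apply, Pi.mul_apply, Function.comp_apply]
  field_simp
  ring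

end gKN

/-- The characteristic identity for the multiplier `Q̃₁ = (u_tx u_x - u_xx u_t)/u_x³`
of the gKN equation, holding for an arbitrary smooth `u` (not assumed a solution). -/
theorem gKN_multiplier_Q1 (f : ℝ → ℝ) (hf : ContDiff ℝ (⊤ : ℕ∞) f)
    (u : ℝ → ℝ → ℝ) (hu : ContDiff ℝ (⊤ : ℕ∞) (Function.uncurry u))
    (hux : ∀ t x, pdx u t x ≠ 0) :
    ∀ t x,
      pdt (fun t x => (1/2) * (pdx (pdx u) t x)^2 / (pdx u t x)^2 + (1/3) * f (u t x) / (pdx u t x)^2) t x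
        + pdx (fun t x =>
            (1/2) * (pdx (pdx u) t x)^2 * (pdt u t x) / (pdx u t x)^3 - (pdx (pdx u) t x) * (pdx (pdt u) t x) / (pdx u t x)^2
              + (1/2) * (pdt u t x)^2 / (pdx u t x)^2 - (1/3) * (pdt u t x) * (f (u t x)) / (pdx u t x)^3) t x
      = ((pdx (pdt u) t x) * (pdx u t x) - (pdx (pdx u) t x) * (pdt u t x)) / (pdx u t x)^3
          * ((pdt u t x) - (pdx (pdx (pdx u)) t x) + (3/2) * (pdx (pdx u) t x)^2 / (pdx u t x) - (f (u t x)) / (pdx u t x)) := by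
  intro t x
  have hf₁ : Differentiable ℝ f := hf.differentiable (by simp)
  have hu₃ : ContDiff ℝ 3 (uncurry u) := hu.of_le (WithTop.coe_le_coe.mpr le_top)
  have hcomm₁ : pdt (pdx u) = pdx (pdt u) := pdt_pdx_comm (hu₃.of_le (by norm_num))
  have hcomm₂ : pdt (pdx (pdx u)) = pdx (pdx (pdt u)) := by
    rw [pdt_pdx_comm (contDiff_pdx hu₃ (by norm_num)), hcomm₁]
  have hux₀ := hux t x
  rw [pdt_gKN_density hf₁ hu₃ hux₀, pdx_gKN_flux hf₁ hu₃ hux₀, hcomm₁, hcomm₂]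
  field_simp
  ring
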